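/- Fix α ∈ (1/3, 1/2) and β ∈ (1−α, 2α) and set Δ_n = 2^{-n}. On a probability space, for each n ≥ 1 let {X_r^n, Y_r^n : 1 ≤ r ≤ 2^{n−1}} be 2^n random variables that (for each fixed n) are mutually independent, each with the centered Gaussian law N(0, Δ_n); define L^n(0) = 0 and L^n(k) = Σ_{r=1}^k X_r^n Y_r^n for 1 ≤ k ≤ 2^{n−1}. Then almost surely only finitely many of the events C_n = { |L^n(m) − L^n(l)| > (m−l)^β Δ_n^{2α} for some 0 ≤ l < m ≤ 2^{n−1} } occur; equivalently, there exists an almost surely finite random N₂ such that for all n ≥ N₂ and all 0 ≤ l < m ≤ 2^{n−1}, |L^n(m) − L^n(l)| ≤ (m−l)^β Δ_n^{2α}. -/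

import Mathlib

open MeasureTheory ProbabilityTheory Filter Finset
open scoped NNReal

open Real

/-!
The increments `Lⁿ(m) - Lⁿ(l)` are sums of `d = m - l` independent products `Xᵣⁿ Yᵣⁿ`, which are
symmetric with moments `E (Xᵣⁿ Yᵣⁿ)^{2j} = Δₙ^{2j} (E G^{2j})²` for a standard Gaussian `G`.
Expanding `(S + Z)^{2q}` binomially, odd terms vanish and induction on the number of summands gives
the moment bound `E (Lⁿ(m) - Lⁿ(l))^{2p} ≤ C_p d^p Δₙ^{2p}`. Markov's inequality at level
`d^β Δₙ^{2α}`, together with `β ≥ 1/2`, bounds each tail by `C_p Δₙ^{2p(1-2α)}`, and a union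
bound over the at most `4ⁿ` pairs `l < m` gives `P(Cₙ) ≤ C_p 2^{-n(2p(1-2α)-2)}`. Choosing `p`
with `2p(1 - 2α) > 2` makes this summable, and Borel–Cantelli concludes.
-/

section Moments

variable {Ω : Type*} [MeasurableSpace Ω] {μ : Measure Ω}

lemma MeasureTheory.MemLp.integrable_pow_of_le [IsFiniteMeasure μ] {f : Ω → ℝ} {n k : ℕ}
    (hf : MemLp f n μ) (hk : k ≤ n) : Integrable (fun ω => f ω ^ k) μ := by
  have h := (hf.mono_exponent (by exact_mod_cast hk)).integrable_norm_pow'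
  exact (integrable_norm_iff (hf.1.pow k)).1 (by simpa only [Pi.pow_apply, norm_pow] using h)

lemma MeasureTheory.MemLp.mul_of_two_mul {f g : Ω → ℝ} {k : ℕ} (hf : MemLp f (2 * k : ℕ) μ)
    (hg : MemLp g (2 * k : ℕ) μ) : MemLp (f * g) k μ := by
  have : ENNReal.HolderTriple (2 * k : ℕ) (2 * k : ℕ) k := ⟨by
    push_cast
    rw [ENNReal.mul_inv (by simp) (by simp), ← add_mul, ENNReal.inv_two_add_inv_two, one_mul]⟩
  exact hg.mul hf

lemma ProbabilityTheory.IndepFun.integral_add_pow [IsFiniteMeasure μ] {U V : Ω → ℝ}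
    (hUV : IndepFun U V μ) {n : ℕ} (hU : MemLp U n μ) (hV : MemLp V n μ) :
    ∫ ω, (U ω + V ω) ^ n ∂μ =
      ∑ k ∈ range (n + 1), (∫ ω, U ω ^ k ∂μ) * (∫ ω, V ω ^ (n - k) ∂μ) * n.choose k := by
  have hpow (k : ℕ) : IndepFun (fun ω => U ω ^ k) (fun ω => V ω ^ (n - k)) μ :=
    hUV.comp (measurable_id.pow_const k) (measurable_id.pow_const (n - k))
  simp_rw [add_pow]
  rw [integral_finsetSum]
  · refine sum_congr rfl fun k _ => ?_
    rw [integral_mul_const, (hpow k).integral_fun_mul_eq_mul_integral (hU.1.pow k) (hV.1.pow _)]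
  · intro k hk
    exact ((hpow k).integrable_mul (hU.integrable_pow_of_le (mem_range_succ_iff.1 hk))
      (hV.integrable_pow_of_le (Nat.sub_le n k))).mul_const _

lemma Finset.sum_range_two_mul_add_one_of_odd {M : Type*} [AddCommMonoid M] {f : ℕ → M}
    (hf : ∀ k, Odd k → f k = 0) (q : ℕ) :
    ∑ k ∈ range (2 * q + 1), f k = ∑ j ∈ range (q + 1), f (2 * j) := by
  induction q with
  | zero => simp
  | succ q ih =>
    rw [show 2 * (q + 1) + 1 = 2 * q + 1 + 1 + 1 by ring, sum_range_succ, sum_range_succ, ih,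
      hf _ (odd_two_mul_add_one q), add_zero, sum_range_succ (n := q + 1), mul_add_one]

lemma measure_lt_abs_le_integral_pow_div [IsFiniteMeasure μ] {W : Ω → ℝ} {n : ℕ}
    (hW : Integrable (fun ω => W ω ^ (2 * n)) μ) {t : ℝ} (ht : 0 < t) :
    μ {ω | t < |W ω|} ≤ ENNReal.ofReal ((∫ ω, W ω ^ (2 * n) ∂μ) / t ^ (2 * n)) := by
  have hsub : {ω | t < |W ω|} ⊆ {ω | t ^ (2 * n) ≤ W ω ^ (2 * n)} := fun ω hω => by
    simpa only [Set.mem_ofPred_eq, (even_two_mul n).pow_abs] using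
      pow_le_pow_left₀ ht.le (le_of_lt hω) (2 * n)
  have hmarkov := mul_meas_ge_le_integral_of_nonneg
    (ae_of_all _ fun ω => (even_two_mul n).pow_nonneg (W ω)) hW (t ^ (2 * n))
  calc μ {ω | t < |W ω|} ≤ μ {ω | t ^ (2 * n) ≤ W ω ^ (2 * n)} := measure_mono hsub
    _ = ENNReal.ofReal (μ.real {ω | t ^ (2 * n) ≤ W ω ^ (2 * n)}) :=
        (ENNReal.ofReal_toReal (measure_ne_top μ _)).symm
    _ ≤ ENNReal.ofReal ((∫ ω, W ω ^ (2 * n) ∂μ) / t ^ (2 * n)) :=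
        ENNReal.ofReal_le_ofReal ((le_div_iff₀' (by positivity)).2 hmarkov)

end Moments

section MomentBound

lemma choose_mul_mul_le_of_moment_bounds {p q j : ℕ} {B δ c z w : ℝ} (hc : 0 ≤ c)
    (hK : 1 ≤ 4 ^ p * B) (hq : q ≤ p) (hjq : j ≤ q) (hj : 0 < j)
    (hz0 : 0 ≤ z) (hz : z ≤ B * δ ^ (2 * j))
    (hw0 : 0 ≤ w) (hw : w ≤ (4 ^ p * B) ^ (q - j) * c ^ (q - j) * δ ^ (2 * (q - j))) :
    z * w * (2 * q).choose (2 * j) ≤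
      (4 ^ p * B) ^ q * δ ^ (2 * q) * (c ^ (q - j) * q.choose j) := by
  set K := 4 ^ p * B
  have hchoose : ((2 * q).choose (2 * j) : ℝ) ≤ 4 ^ p :=
    calc ((2 * q).choose (2 * j) : ℝ) ≤ 2 ^ (2 * q) := by exact_mod_cast Nat.choose_le_two_pow _ _
      _ = 4 ^ q := by rw [pow_mul]; norm_num
      _ ≤ 4 ^ p := pow_le_pow_right₀ (by norm_num) hq
  have hKpow : K ^ (q - j) * K ≤ K ^ q := by
    rw [← pow_succ]; exact pow_le_pow_right₀ hK (by omega)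
  have hchoose' : (1 : ℝ) ≤ q.choose j := by exact_mod_cast Nat.choose_pos hjq
  have hcq : 0 ≤ c ^ (q - j) := pow_nonneg hc _
  have hKq : 0 ≤ K ^ q := pow_nonneg (zero_le_one.trans hK) q
  have hδq : 0 ≤ δ ^ (2 * q) := (even_two_mul q).pow_nonneg δ
  calc z * w * (2 * q).choose (2 * j)
      ≤ (B * δ ^ (2 * j)) * (K ^ (q - j) * c ^ (q - j) * δ ^ (2 * (q - j))) * 4 ^ p :=
        mul_le_mul (mul_le_mul hz hw hw0 (hz0.trans hz)) hchoose (Nat.cast_nonneg _)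
          (mul_nonneg (hz0.trans hz) (hw0.trans hw))
    _ = (K ^ (q - j) * K) * δ ^ (2 * q) * (c ^ (q - j) * 1) := by
        rw [show 2 * q = 2 * j + 2 * (q - j) by omega, pow_add]; simp only [K]; ring
    _ ≤ K ^ q * δ ^ (2 * q) * (c ^ (q - j) * q.choose j) := by gcongr

variable {Ω ι : Type*} [MeasurableSpace Ω] {μ : Measure Ω} [IsProbabilityMeasure μ]

/-- The constant `4 ^ p * B` absorbs the binomial coefficients `(2q).choose (2j) ≤ 4 ^ p`. -/
theorem ProbabilityTheory.IndepFun.integral_add_pow_two_mul_le {Z S : Ω → ℝ}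
    (hZS : IndepFun Z S μ) {p q : ℕ} (hq : q ≤ p) (hZ : MemLp Z (2 * q : ℕ) μ)
    (hS : MemLp S (2 * q : ℕ) μ) {B c δ : ℝ} (hc : 0 ≤ c)
    (hodd : ∀ k, Odd k → ∫ ω, Z ω ^ k ∂μ = 0)
    (heven : ∀ j ≤ p, ∫ ω, Z ω ^ (2 * j) ∂μ ≤ B * δ ^ (2 * j))
    (hSmom : ∀ r ≤ p, ∫ ω, S ω ^ (2 * r) ∂μ ≤ (4 ^ p * B) ^ r * c ^ r * δ ^ (2 * r)) :
    ∫ ω, (Z ω + S ω) ^ (2 * q) ∂μ ≤ (4 ^ p * B) ^ q * (c + 1) ^ q * δ ^ (2 * q) := by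
  have hK : 1 ≤ 4 ^ p * B := by
    have h1 : 1 ≤ B := by simpa using heven 0 (Nat.zero_le p)
    have h4 : (1 : ℝ) ≤ 4 ^ p := one_le_pow₀ (by norm_num)
    nlinarith
  have hexpand : ∫ ω, (Z ω + S ω) ^ (2 * q) ∂μ = ∑ j ∈ range (q + 1),
      (∫ ω, Z ω ^ (2 * j) ∂μ) * (∫ ω, S ω ^ (2 * (q - j)) ∂μ) * (2 * q).choose (2 * j) := by
    rw [hZS.integral_add_pow hZ hS,
      sum_range_two_mul_add_one_of_odd (fun k hk => by simp [hodd k hk])]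
    simp_rw [← Nat.mul_sub]
  have hterm : ∀ j ∈ range (q + 1),
      (∫ ω, Z ω ^ (2 * j) ∂μ) * (∫ ω, S ω ^ (2 * (q - j)) ∂μ) * (2 * q).choose (2 * j) ≤
        (4 ^ p * B) ^ q * δ ^ (2 * q) * (1 ^ j * c ^ (q - j) * q.choose j) := by
    intro j hj
    have hjq : j ≤ q := mem_range_succ_iff.1 hj
    have hSj := hSmom (q - j) (by omega)
    rcases Nat.eq_zero_or_pos j with rfl | hj0
    · simpa [mul_comm, mul_left_comm, mul_assoc] using hSj
    rw [one_pow, one_mul]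
    exact choose_mul_mul_le_of_moment_bounds hc hK hq hjq hj0
      (integral_nonneg fun ω => (even_two_mul j).pow_nonneg _) (heven j (hjq.trans hq))
      (integral_nonneg fun ω => (even_two_mul _).pow_nonneg _) hSj
  calc ∫ ω, (Z ω + S ω) ^ (2 * q) ∂μ
      ≤ ∑ j ∈ range (q + 1),
          (4 ^ p * B) ^ q * δ ^ (2 * q) * (1 ^ j * c ^ (q - j) * q.choose j) := by
        rw [hexpand]; exact sum_le_sum hterm
    _ = (4 ^ p * B) ^ q * (c + 1) ^ q * δ ^ (2 * q) := by
        rw [← mul_sum, ← add_pow]; ring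

theorem integral_sum_pow_two_mul_le {Z : ι → Ω → ℝ} {p : ℕ} {B δ : ℝ}
    (hZ : ∀ i (k : ℕ), MemLp (Z i) k μ)
    (hindep : ∀ (J : Finset ι) (a : ι), a ∉ J → IndepFun (fun ω => ∑ i ∈ J, Z i ω) (Z a) μ)
    (hodd : ∀ i k, Odd k → ∫ ω, Z i ω ^ k ∂μ = 0)
    (heven : ∀ i, ∀ j ≤ p, ∫ ω, Z i ω ^ (2 * j) ∂μ ≤ B * δ ^ (2 * j))
    (I : Finset ι) {q : ℕ} (hq : q ≤ p) :
    ∫ ω, (∑ i ∈ I, Z i ω) ^ (2 * q) ∂μ ≤ (4 ^ p * B) ^ q * (#I : ℝ) ^ q * δ ^ (2 * q) := by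
  classical
  induction I using Finset.induction_on generalizing q with
  | empty => cases q <;> simp
  | insert a s ha ih =>
    simp_rw [sum_insert ha, card_insert_of_notMem ha, Nat.cast_add_one]
    exact (hindep s a ha).symm.integral_add_pow_two_mul_le hq (hZ a _)
      (memLp_finsetSum s fun i _ => hZ i _) (Nat.cast_nonneg _) (hodd a) (heven a)
      fun r hr => ih hr

end MomentBound

section Gaussian

noncomputable def gaussianMoment (k : ℕ) : ℝ := ∫ x, x ^ k ∂gaussianReal 0 1

lemma integral_pow_gaussianReal (v : ℝ≥0) (k : ℕ) :
    ∫ x, x ^ k ∂gaussianReal 0 v = √v ^ k * gaussianMoment k := by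
  have hscale : (gaussianReal 0 1).map (√v * ·) = gaussianReal 0 v := by
    rw [gaussianReal_map_const_mul, mul_zero]
    congr 1
    ext
    simp [Real.sq_sqrt v.coe_nonneg]
  rw [← hscale, integral_map (by fun_prop) (by fun_prop), gaussianMoment, ← integral_const_mul]
  simp_rw [mul_pow]

lemma gaussianMoment_of_odd {k : ℕ} (hk : Odd k) : gaussianMoment k = 0 := by
  have hneg : gaussianMoment k = -gaussianMoment k := by
    conv_lhs => rw [gaussianMoment, ← neg_zero, ← gaussianReal_map_neg]
    rw [integral_map (by fun_prop) (by fun_prop), gaussianMoment, ← integral_neg]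
    simp_rw [hk.neg_pow]
  linarith

variable {Ω : Type*} [MeasurableSpace Ω] {P : Measure Ω} {X Y : Ω → ℝ} {v : ℝ≥0}

lemma ProbabilityTheory.HasLaw.memLp_of_gaussianReal (hX : HasLaw X (gaussianReal 0 v) P)
    (q : ℕ) : MemLp X q P := by
  have h : MemLp id q (gaussianReal 0 v) := mod_cast memLp_id_gaussianReal (q : ℝ≥0)
  rw [← hX.map_eq, memLp_map_measure_iff aestronglyMeasurable_id hX.aemeasurable] at h
  exact h

lemma ProbabilityTheory.IndepFun.integral_mul_pow_of_gaussianReal (hXY : IndepFun X Y P)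
    (hX : HasLaw X (gaussianReal 0 v) P) (hY : HasLaw Y (gaussianReal 0 v) P) (k : ℕ) :
    ∫ ω, (X ω * Y ω) ^ k ∂P = v ^ k * gaussianMoment k ^ 2 := by
  have hpow : IndepFun (fun ω => X ω ^ k) (fun ω => Y ω ^ k) P :=
    hXY.comp (measurable_id.pow_const k) (measurable_id.pow_const k)
  have hXk : ∫ ω, X ω ^ k ∂P = √v ^ k * gaussianMoment k := by
    rw [← integral_pow_gaussianReal]; exact hX.integral_comp (f := (· ^ k)) (by fun_prop)
  have hYk : ∫ ω, Y ω ^ k ∂P = √v ^ k * gaussianMoment k := by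
    rw [← integral_pow_gaussianReal]; exact hY.integral_comp (f := (· ^ k)) (by fun_prop)
  simp_rw [mul_pow]
  rw [hpow.integral_fun_mul_eq_mul_integral (hX.aemeasurable.pow_const k).aestronglyMeasurable
      (hY.aemeasurable.pow_const k).aestronglyMeasurable, hXk, hYk, mul_mul_mul_comm, ← mul_pow,
    Real.mul_self_sqrt v.coe_nonneg]
  ring

end Gaussian

section GaussianProducts

variable {Ω ι : Type*} [MeasurableSpace Ω] {P : Measure Ω} {X Y : ι → Ω → ℝ}

lemma ProbabilityTheory.iIndepFun.indepFun_sum_mul_of_notMem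
    (h : iIndepFun (fun p : Bool × ι => if p.1 then X p.2 else Y p.2) P)
    (hX : ∀ i, AEMeasurable (X i) P) (hY : ∀ i, AEMeasurable (Y i) P) {J : Finset ι} {a : ι}
    (ha : a ∉ J) :
    IndepFun (fun ω => ∑ i ∈ J, X i ω * Y i ω) (fun ω => X a ω * Y a ω) P := by
  have hdisj : Disjoint (univ ×ˢ J : Finset (Bool × ι)) (univ ×ˢ {a}) :=
    disjoint_product.2 (Or.inr (disjoint_singleton_right.2 ha))
  have hmeas (p : Bool × ι) : AEMeasurable (if p.1 then X p.2 else Y p.2) P := by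
    cases p.1 <;> simp [hX, hY]
  have hmemJ (i : J) (b : Bool) : (b, i.1) ∈ (univ ×ˢ J : Finset (Bool × ι)) :=
    mem_product.2 ⟨mem_univ _, i.2⟩
  have hmema (b : Bool) : (b, a) ∈ (univ ×ˢ {a} : Finset (Bool × ι)) :=
    mem_product.2 ⟨mem_univ _, mem_singleton_self a⟩
  have := (h.indepFun_finset₀ _ _ hdisj hmeas).comp
    (φ := fun u => ∑ i ∈ J.attach, u ⟨_, hmemJ i true⟩ * u ⟨_, hmemJ i false⟩)
    (ψ := fun u => u ⟨_, hmema true⟩ * u ⟨_, hmema false⟩) (by fun_prop) (by fun_prop)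
  convert this using 1
  · ext ω
    exact (sum_attach J fun i => X i ω * Y i ω).symm
  · rfl

noncomputable def gaussianProductMomentConst (p : ℕ) : ℝ :=
  4 ^ p * ∑ j ∈ range (p + 1), gaussianMoment (2 * j) ^ 2

variable [IsProbabilityMeasure P] {v : ℝ≥0}

theorem integral_sum_mul_pow_le
    (h : iIndepFun (fun p : Bool × ι => if p.1 then X p.2 else Y p.2) P)
    (hX : ∀ i, HasLaw (X i) (gaussianReal 0 v) P) (hY : ∀ i, HasLaw (Y i) (gaussianReal 0 v) P)
    (J : Finset ι) (p : ℕ) :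
    ∫ ω, (∑ i ∈ J, X i ω * Y i ω) ^ (2 * p) ∂P ≤
      gaussianProductMomentConst p ^ p * (#J : ℝ) ^ p * v ^ (2 * p) := by
  have hXY (i : ι) : IndepFun (X i) (Y i) P := by
    simpa using h.indepFun (i := (true, i)) (j := (false, i)) (by simp)
  refine integral_sum_pow_two_mul_le (Z := fun i ω => X i ω * Y i ω)
    (fun i k => ((hX i).memLp_of_gaussianReal _).mul_of_two_mul ((hY i).memLp_of_gaussianReal _))
    (fun J a ha => h.indepFun_sum_mul_of_notMem (fun i => (hX i).aemeasurable)
      (fun i => (hY i).aemeasurable) ha)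
    (fun i k hk => ?_) (fun i j hj => ?_) J le_rfl
  · rw [(hXY i).integral_mul_pow_of_gaussianReal (hX i) (hY i), gaussianMoment_of_odd hk]
    simp
  · rw [(hXY i).integral_mul_pow_of_gaussianReal (hX i) (hY i), mul_comm]
    gcongr
    exact single_le_sum (f := fun j => gaussianMoment (2 * j) ^ 2) (fun _ _ => sq_nonneg _)
      (mem_range_succ_iff.2 hj)

theorem measure_lt_abs_sum_mul_le
    (h : iIndepFun (fun p : Bool × ι => if p.1 then X p.2 else Y p.2) P)
    (hX : ∀ i, HasLaw (X i) (gaussianReal 0 v) P) (hY : ∀ i, HasLaw (Y i) (gaussianReal 0 v) P)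
    (J : Finset ι) (p : ℕ) {t : ℝ} (ht : 0 < t) :
    P {ω | t < |∑ i ∈ J, X i ω * Y i ω|} ≤ ENNReal.ofReal
      (gaussianProductMomentConst p ^ p * (#J : ℝ) ^ p * v ^ (2 * p) / t ^ (2 * p)) := by
  have hint : Integrable (fun ω => (∑ i ∈ J, X i ω * Y i ω) ^ (2 * p)) P :=
    (memLp_finsetSum J fun i _ => ((hX i).memLp_of_gaussianReal _).mul_of_two_mul
      ((hY i).memLp_of_gaussianReal _)).integrable_pow_of_le le_rfl
  exact (measure_lt_abs_le_integral_pow_div hint ht).trans (ENNReal.ofReal_le_ofReal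
    (div_le_div_of_nonneg_right (integral_sum_mul_pow_le h hX hY J p) (by positivity)))

end GaussianProducts

section Tails

variable {Ω : Type*} [MeasurableSpace Ω] {μ : Measure Ω}

lemma pow_mul_pow_div_rpow_mul_rpow_pow_le {d Δ α β : ℝ} (p : ℕ) (hd : 1 ≤ d) (hΔ : 0 < Δ)
    (hβ : 1 / 2 ≤ β) :
    d ^ p * Δ ^ (2 * p) / (d ^ β * Δ ^ (2 * α)) ^ (2 * p) ≤ Δ ^ (2 * p * (1 - 2 * α)) := by
  have hd0 : 0 < d := one_pos.trans_le hd
  rw [mul_pow, ← Real.rpow_mul_natCast hd0.le, ← Real.rpow_mul_natCast hΔ.le,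
    ← Real.rpow_natCast d, ← Real.rpow_natCast Δ, mul_div_mul_comm, ← Real.rpow_sub hΔ]
  calc d ^ (p : ℝ) / d ^ (β * ↑(2 * p)) * Δ ^ ((↑(2 * p) : ℝ) - 2 * α * ↑(2 * p))
      ≤ 1 * Δ ^ ((↑(2 * p) : ℝ) - 2 * α * ↑(2 * p)) := by
        gcongr
        refine div_le_one_of_le₀ (Real.rpow_le_rpow_of_exponent_le hd ?_) (by positivity)
        push_cast
        nlinarith [(Nat.cast_nonneg p : (0 : ℝ) ≤ p)]
    _ = Δ ^ (2 * p * (1 - 2 * α)) := by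
        rw [one_mul]; push_cast; ring_nf

lemma measure_exists_increment_gt_le {L : ℕ → Ω → ℝ} {K p : ℕ} {C Δ α β : ℝ}
    (hC : 0 ≤ C) (hΔ : 0 < Δ) (hβ : 1 / 2 ≤ β)
    (htail : ∀ l m, l < m → m ≤ K → ∀ t, 0 < t → μ {ω | t < |L m ω - L l ω|} ≤
      ENNReal.ofReal (C * ((m : ℝ) - l) ^ p * Δ ^ (2 * p) / t ^ (2 * p))) :
    μ {ω | ∃ l m, l < m ∧ m ≤ K ∧ ((m : ℝ) - l) ^ β * Δ ^ (2 * α) < |L m ω - L l ω|} ≤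
      ENNReal.ofReal ((K + 1) ^ 2 * (C * Δ ^ (2 * p * (1 - 2 * α)))) := by
  set A : ℕ × ℕ → Set Ω := fun lm => {ω | lm.1 < lm.2 ∧ lm.2 ≤ K ∧
    ((lm.2 : ℝ) - lm.1) ^ β * Δ ^ (2 * α) < |L lm.2 ω - L lm.1 ω|}
  have hcover : {ω | ∃ l m, l < m ∧ m ≤ K ∧ ((m : ℝ) - l) ^ β * Δ ^ (2 * α) < |L m ω - L l ω|}
      ⊆ ⋃ lm ∈ range (K + 1) ×ˢ range (K + 1), A lm := by
    rintro ω ⟨l, m, hlm, hm, hω⟩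
    exact Set.mem_biUnion (x := (l, m))
      (mem_product.2 ⟨mem_range.2 (by omega), mem_range.2 (by omega)⟩) ⟨hlm, hm, hω⟩
  have hA (lm : ℕ × ℕ) : μ (A lm) ≤ ENNReal.ofReal (C * Δ ^ (2 * p * (1 - 2 * α))) := by
    obtain ⟨l, m⟩ := lm
    by_cases hlm : l < m ∧ m ≤ K
    swap
    · rw [show A (l, m) = ∅ from Set.eq_empty_of_forall_notMem fun ω hω => hlm ⟨hω.1, hω.2.1⟩,
        measure_empty]
      exact zero_le
    have hd : (1 : ℝ) ≤ (m : ℝ) - l := by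
      have : (l : ℝ) + 1 ≤ m := by exact_mod_cast hlm.1
      linarith
    refine (measure_mono fun ω hω => hω.2.2).trans ((htail l m hlm.1 hlm.2 _
      (by positivity)).trans (ENNReal.ofReal_le_ofReal ?_))
    rw [mul_assoc, mul_div_assoc]
    exact mul_le_mul_of_nonneg_left (pow_mul_pow_div_rpow_mul_rpow_pow_le p hd hΔ hβ) hC
  calc _ ≤ μ (⋃ lm ∈ range (K + 1) ×ˢ range (K + 1), A lm) := measure_mono hcover
    _ ≤ ∑ lm ∈ range (K + 1) ×ˢ range (K + 1), μ (A lm) := measure_biUnion_finset_le _ _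
    _ ≤ ∑ _lm ∈ range (K + 1) ×ˢ range (K + 1),
          ENNReal.ofReal (C * Δ ^ (2 * p * (1 - 2 * α))) := sum_le_sum fun lm _ => hA lm
    _ = ENNReal.ofReal ((K + 1) ^ 2 * (C * Δ ^ (2 * p * (1 - 2 * α)))) := by
        rw [sum_const, card_product, card_range, nsmul_eq_mul, ← ENNReal.ofReal_natCast,
          ← ENNReal.ofReal_mul (by positivity)]
        push_cast
        ring_nf

end Tails

lemma ProbabilityTheory.HasLaw.of_map_eq {Ω 𝓧 : Type*} [MeasurableSpace Ω] [MeasurableSpace 𝓧]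
    {P : Measure Ω} {μ : Measure 𝓧} [NeZero μ] {X : Ω → 𝓧} (h : P.map X = μ) : HasLaw X μ P :=
  ⟨aemeasurable_of_map_neZero (by rw [h]; infer_instance), h⟩

lemma Finset.sum_Icc_sub_sum_Icc_eq_sum_attachFin {M : Type*} [AddCommGroup M] (f : ℕ → M)
    {l m K : ℕ} (hlm : l ≤ m) (hK : ∀ r ∈ Ico l m, r < K) :
    ∑ r ∈ Icc 1 m, f r - ∑ r ∈ Icc 1 l, f r = ∑ i ∈ (Ico l m).attachFin hK, f (i + 1) := by
  have hshift : ∑ i ∈ (Ico l m).attachFin hK, f (i + 1) = ∑ r ∈ Ico (l + 1) (m + 1), f r :=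
    calc ∑ i ∈ (Ico l m).attachFin hK, f (i + 1)
        = ∑ r ∈ ((Ico l m).attachFin hK).map Fin.valEmbedding, f (r + 1) :=
          (sum_map _ Fin.valEmbedding fun r => f (r + 1)).symm
      _ = ∑ r ∈ Ico l m, f (r + 1) := by rw [map_valEmbedding_attachFin]
      _ = ∑ r ∈ Ico (l + 1) (m + 1), f r := sum_Ico_add' f l m 1
  rw [hshift, sub_eq_iff_eq_add', ← Ico_add_one_right_eq_Icc, ← Ico_add_one_right_eq_Icc,
    sum_Ico_consecutive _ (by omega) (by omega)]

lemma inv_two_pow_rpow (n : ℕ) (ε : ℝ) : ((2 : ℝ) ^ n)⁻¹ ^ ε = ((2 ^ ε)⁻¹) ^ n := by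
  rw [Real.inv_rpow (by positivity), ← Real.rpow_natCast, ← Real.rpow_mul (by norm_num), mul_comm,
    Real.rpow_mul (by norm_num), Real.rpow_natCast, inv_pow]

lemma sq_two_pow_pred_add_one_mul_rpow_le {n : ℕ} (hn : 1 ≤ n) {C : ℝ} (hC : 0 ≤ C) (a : ℝ) :
    (((2 ^ (n - 1) : ℕ) : ℝ) + 1) ^ 2 * (C * ((2 : ℝ) ^ n)⁻¹ ^ a) ≤
      C * ((2 ^ (a - 2) : ℝ)⁻¹) ^ n := by
  have hK : ((2 ^ (n - 1) : ℕ) : ℝ) + 1 ≤ 2 ^ n := by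
    have h2n : 2 ^ n = 2 * 2 ^ (n - 1) := by rw [← pow_succ']; congr 1; omega
    have := @Nat.one_le_two_pow (n - 1)
    exact_mod_cast (by omega : 2 ^ (n - 1) + 1 ≤ 2 ^ n)
  rw [← inv_two_pow_rpow, Real.rpow_sub (by positivity), Real.rpow_two]
  calc (((2 ^ (n - 1) : ℕ) : ℝ) + 1) ^ 2 * (C * ((2 : ℝ) ^ n)⁻¹ ^ a)
      ≤ ((2 : ℝ) ^ n) ^ 2 * (C * ((2 : ℝ) ^ n)⁻¹ ^ a) := by gcongr
    _ = C * (((2 : ℝ) ^ n)⁻¹ ^ a / ((2 : ℝ) ^ n)⁻¹ ^ 2) := by field_simp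

section Levels

variable {Ω : Type*} [MeasurableSpace Ω] {P : Measure Ω} [IsProbabilityMeasure P]

theorem measure_exists_levy_increment_gt_le {α β : ℝ} (hβ : 1 / 2 ≤ β) (p : ℕ) {n : ℕ}
    (hn : 1 ≤ n) {X Y : ℕ → Ω → ℝ}
    (hIndep : iIndepFun (fun q : Bool × Fin (2 ^ (n - 1)) =>
      if q.1 then X ((q.2 : ℕ) + 1) else Y ((q.2 : ℕ) + 1)) P)
    (hX : ∀ r, 1 ≤ r → r ≤ 2 ^ (n - 1) → P.map (X r) = gaussianReal 0 ((2 : ℝ≥0)⁻¹ ^ n))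
    (hY : ∀ r, 1 ≤ r → r ≤ 2 ^ (n - 1) → P.map (Y r) = gaussianReal 0 ((2 : ℝ≥0)⁻¹ ^ n)) :
    P {ω | ∃ l m : ℕ, l < m ∧ m ≤ 2 ^ (n - 1) ∧
      ((m : ℝ) - l) ^ β * (((2 : ℝ) ^ n)⁻¹) ^ (2 * α) <
        |(∑ r ∈ Icc 1 m, X r ω * Y r ω) - ∑ r ∈ Icc 1 l, X r ω * Y r ω|} ≤
      ENNReal.ofReal (gaussianProductMomentConst p ^ p *
        ((2 ^ (2 * p * (1 - 2 * α) - 2) : ℝ)⁻¹) ^ n) := by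
  have hC : 0 ≤ gaussianProductMomentConst p ^ p := by
    unfold gaussianProductMomentConst; positivity
  refine (measure_exists_increment_gt_le (p := p) hC (by positivity) hβ
    fun l m hlm hm t ht => ?_).trans
      (ENNReal.ofReal_le_ofReal (sq_two_pow_pred_add_one_mul_rpow_le hn hC _))
  have hK : ∀ r ∈ Ico l m, r < 2 ^ (n - 1) := fun r hr => (mem_Ico.1 hr).2.trans_le hm
  simp only [sum_Icc_sub_sum_Icc_eq_sum_attachFin _ hlm.le hK]
  convert measure_lt_abs_sum_mul_le (X := fun i : Fin (2 ^ (n - 1)) => X (i + 1))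
    (Y := fun i : Fin (2 ^ (n - 1)) => Y (i + 1)) hIndep
    (fun i => HasLaw.of_map_eq (hX _ (by omega) i.isLt))
    (fun i => HasLaw.of_map_eq (hY _ (by omega) i.isLt)) _ p ht using 5
  · rw [card_attachFin, Nat.card_Ico, Nat.cast_sub hlm.le]
  · push_cast
    rw [inv_pow]

end Levels

lemma MeasureTheory.ae_eventually_notMem_of_le_geometric {Ω : Type*} [MeasurableSpace Ω]
    {μ : Measure Ω} {s : ℕ → Set Ω} {C ρ : ℝ} (hC : 0 ≤ C) (hρ0 : 0 ≤ ρ) (hρ1 : ρ < 1)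
    (hs : ∀ n, μ (s n) ≤ ENNReal.ofReal (C * ρ ^ n)) :
    ∀ᵐ ω ∂μ, ∀ᶠ n in atTop, ω ∉ s n := by
  have hsummable : Summable fun n => C * ρ ^ n :=
    (summable_geometric_of_lt_one hρ0 hρ1).mul_left C
  refine ae_eventually_notMem
    (ne_top_of_le_ne_top (ENNReal.ofReal_ne_top (r := ∑' n, C * ρ ^ n)) ?_)
  rw [ENNReal.ofReal_tsum_of_nonneg (fun n => by positivity) hsummable]
  exact ENNReal.tsum_le_tsum hs

theorem levy_walk_records_finite
    (α β : ℝ) (hα2 : α < 1 / 2)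
    (hβ1 : 1 - α < β)
    {Ω : Type*} [MeasurableSpace Ω] (P : Measure Ω) [IsProbabilityMeasure P]
    (X Y : ℕ → ℕ → Ω → ℝ)
    -- within each level `n ≥ 1`, the `2ⁿ` variables `Xᵣⁿ, Yᵣⁿ`, `1 ≤ r ≤ 2^{n−1}`, are
    -- mutually independent
    (hIndep : ∀ n : ℕ, 1 ≤ n →
      iIndepFun
        (fun p : Bool × Fin (2 ^ (n - 1)) =>
          if p.1 then X n ((p.2 : ℕ) + 1) else Y n ((p.2 : ℕ) + 1)) P)
    -- each has the centered Gaussian law with variance `Δₙ = 2^{−n}`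
    (hX : ∀ n r : ℕ, 1 ≤ n → 1 ≤ r → r ≤ 2 ^ (n - 1) →
      P.map (X n r) = gaussianReal 0 ((2 : ℝ≥0)⁻¹ ^ n))
    (hY : ∀ n r : ℕ, 1 ≤ n → 1 ≤ r → r ≤ 2 ^ (n - 1) →
      P.map (Y n r) = gaussianReal 0 ((2 : ℝ≥0)⁻¹ ^ n)) :
    ∀ᵐ ω ∂P, ∃ N₂ : ℕ, ∀ n : ℕ, N₂ ≤ n → ∀ l m : ℕ, l < m → m ≤ 2 ^ (n - 1) →
      |(∑ r ∈ Finset.Icc 1 m, X n r ω * Y n r ω) -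
        ∑ r ∈ Finset.Icc 1 l, X n r ω * Y n r ω| ≤
          ((m : ℝ) - l) ^ β * (((2 : ℝ) ^ n)⁻¹) ^ (2 * α) := by
  obtain ⟨p, hp⟩ := exists_nat_gt (1 / (1 - 2 * α))
  have hε : 0 < 2 * p * (1 - 2 * α) - 2 := by
    rw [div_lt_iff₀ (by linarith)] at hp
    linarith
  have hβ : 1 / 2 ≤ β := by linarith
  set ρ : ℝ := (2 ^ (2 * p * (1 - 2 * α) - 2))⁻¹
  have hbad := ae_eventually_notMem_of_le_geometric (C := gaussianProductMomentConst p ^ p * ρ)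
    (by unfold gaussianProductMomentConst; positivity) (by positivity)
    (inv_lt_one_of_one_lt₀ (Real.one_lt_rpow one_lt_two hε)) fun n => by
      -- levels are shifted by one: the hypotheses only describe levels `n ≥ 1`
      rw [mul_assoc, ← pow_succ']
      exact measure_exists_levy_increment_gt_le hβ p (Nat.le_add_left 1 n)
        (hIndep (n + 1) (by omega)) (hX (n + 1) · (by omega)) (hY (n + 1) · (by omega))
  filter_upwards [hbad] with ω hω
  obtain ⟨N, hN⟩ := eventually_atTop.1 hω
  refine ⟨N + 1, fun n hn l m hlm hm => not_lt.1 fun hlt => hN (n - 1) (by omega) ?_⟩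
  rw [Nat.sub_add_cancel (by omega : 1 ≤ n)]
  exact ⟨l, m, hlm, hm, hlt⟩
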